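/- arXiv:1011.3359 — 2 statements merged into one kernel-verified Lean document; each statement's English description precedes it below -/
import Mathlib

section
/- Let ν > -1 and let μ, μ' be two distinct positive zeros of the Bessel function J_ν (i.e. μ, μ' > 0, μ ≠ μ', J_ν(μ) = J_ν(μ') = 0). Then ∫₀¹ J_ν(μx) · J_ν(μ'x) · x dx = 0. -/
/-!
Write `J_ν(x) = (x/2)^ν g(x²/4)` with the entire function
`g(t) = ∑ (-1)ⁿ tⁿ / (n! Γ(ν+n+1))`; Bessel's equation becomes `t g'' + (ν+1) g' + g = 0`.
For `H(t) = B g(At) g'(Bt) - A g'(At) g(Bt)` this gives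
`d/dx (x^(2ν+2) H(x²)) = 2 (A - B) x^(2ν+1) g(Ax²) g(Bx²)`. Integrate over `[0, 1]` with
`A = μ²/4 ≠ B = μ'²/4`: the boundary term at `0` vanishes because `2ν + 2 > 0`, the one at `1`
because `g(A) = g(B) = 0`.
-/

open scoped Real

/-- The Bessel function of the first kind of order `ν`, defined by its power series
`J_ν(x) = Σ_{r=0}^∞ ((-1)^r / (r! · Γ(ν + r + 1))) · (x/2)^(ν + 2r)`. -/
noncomputable def besselJ (ν x : ℝ) : ℝ :=
  ∑' r : ℕ, ((-1 : ℝ) ^ r / (r.factorial * Real.Gamma (ν + r + 1))) *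
    (x / 2) ^ (ν + 2 * (r : ℝ))

open Filter FormalMultilinearSeries
open scoped NNReal

section PowerSeries

variable {a : ℕ → ℝ}

def derivCoeff (a : ℕ → ℝ) (n : ℕ) : ℝ := (n + 1) * a (n + 1)

lemma summable_norm_mul_pow_of_radius_eq_top (ha : (ofScalars ℝ a).radius = ⊤) (r : ℝ≥0) :
    Summable fun n => ‖a n‖ * (r : ℝ) ^ n := by
  simpa only [ofScalars_norm] using
    (ofScalars ℝ a).summable_norm_mul_pow (ha ▸ ENNReal.coe_lt_top)

lemma hasSum_ofScalarsSum (ha : (ofScalars ℝ a).radius = ⊤) (t : ℝ) :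
    HasSum (fun n => a n * t ^ n) (ofScalarsSum a t) := by
  rw [ofScalars_sum_eq]
  simp only [smul_eq_mul]
  refine (Summable.of_norm ?_).hasSum
  simpa [norm_mul, norm_pow] using summable_norm_mul_pow_of_radius_eq_top ha ‖t‖₊

lemma succ_mul_pow_le_two_mul_add_two_pow (r : ℝ) (hr : 0 ≤ r) (n : ℕ) :
    (n + 1) * r ^ n ≤ (2 * r + 2) ^ (n + 1) := by
  have hn : ((n + 1 : ℕ) : ℝ) ≤ 2 ^ (n + 1) := by exact_mod_cast (Nat.lt_two_pow_self).le
  have hr' : r ^ n ≤ (r + 1) ^ (n + 1) :=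
    (pow_le_pow_left₀ hr (by linarith) n).trans (pow_le_pow_right₀ (by linarith) n.le_succ)
  calc (n + 1) * r ^ n ≤ 2 ^ (n + 1) * (r + 1) ^ (n + 1) := by
        push_cast at hn; gcongr
    _ = (2 * r + 2) ^ (n + 1) := by rw [← mul_pow]; ring

lemma radius_ofScalars_derivCoeff (ha : (ofScalars ℝ a).radius = ⊤) :
    (ofScalars ℝ (derivCoeff a)).radius = ⊤ := by
  refine radius_eq_top_of_summable_norm _ fun r => ?_
  have hs := (summable_nat_add_iff 1).2 (summable_norm_mul_pow_of_radius_eq_top ha (2 * r + 2))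
  refine Summable.of_nonneg_of_le (fun n => by positivity) (fun n => ?_) hs
  rw [ofScalars_norm, derivCoeff, norm_mul, mul_right_comm, mul_comm]
  have hn : ‖(n : ℝ) + 1‖ = n + 1 := Real.norm_of_nonneg (by positivity)
  push_cast
  rw [hn]
  gcongr
  exact succ_mul_pow_le_two_mul_add_two_pow r r.2 n

lemma hasDerivAt_ofScalarsSum (ha : (ofScalars ℝ a).radius = ⊤) (t : ℝ) :
    HasDerivAt (ofScalarsSum a) (ofScalarsSum (derivCoeff a) t) t := by
  have ha' := radius_ofScalars_derivCoeff ha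
  set R : ℝ≥0 := ‖t‖₊ + 1
  have ht : t ∈ Metric.ball (0 : ℝ) R := by
    rw [mem_ball_zero_iff]; exact_mod_cast (lt_add_one ‖t‖₊)
  have hu : Summable fun n => ‖derivCoeff a (n - 1)‖ * (R : ℝ) ^ (n - 1) :=
    (summable_nat_add_iff 1).1 (summable_norm_mul_pow_of_radius_eq_top ha' R)
  have hbound : ∀ n, ∀ y ∈ Metric.ball (0 : ℝ) R,
      ‖a n * (n * y ^ (n - 1))‖ ≤ ‖derivCoeff a (n - 1)‖ * (R : ℝ) ^ (n - 1) := by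
    intro n y hy
    rcases n with _ | n
    · simp
    · have hy : ‖y‖ ≤ R := (mem_ball_zero_iff.1 hy).le
      simp only [derivCoeff, Nat.add_sub_cancel, norm_mul, norm_pow, Nat.cast_succ]
      rw [Real.norm_of_nonneg (by positivity : (0 : ℝ) ≤ n + 1), ← mul_assoc, mul_comm ‖a _‖]
      gcongr
  have hderiv := hasDerivAt_tsum_of_isPreconnected hu Metric.isOpen_ball
    (convex_ball _ _).isPreconnected
    (fun n y _ => (hasDerivAt_pow n y).const_mul (a n)) hbound ht
    (hasSum_ofScalarsSum ha t).summable ht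
  have hshift :
      HasSum (fun n => a n * (n * t ^ (n - 1))) (ofScalarsSum (derivCoeff a) t) := by
    rw [← hasSum_nat_add_iff' 1]
    simpa [derivCoeff, mul_comm, mul_left_comm] using hasSum_ofScalarsSum ha' t
  rw [ofScalarsSum_eq_tsum, ← hshift.tsum_eq]
  simpa only [smul_eq_mul] using hderiv

lemma hasSum_natCast_mul_mul_pow (ha : (ofScalars ℝ a).radius = ⊤) (t : ℝ) :
    HasSum (fun n => n * a n * t ^ n) (t * ofScalarsSum (derivCoeff a) t) := by
  rw [← hasSum_nat_add_iff' 1]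
  simpa [derivCoeff, pow_succ, mul_comm, mul_left_comm, mul_assoc]
    using (hasSum_ofScalarsSum (radius_ofScalars_derivCoeff ha) t).mul_left t

lemma ofScalarsSum_besselODE {ν : ℝ} (ha : (ofScalars ℝ a).radius = ⊤)
    (hrec : ∀ n : ℕ, (n + 1) * (ν + n + 1) * a (n + 1) = -a n) (t : ℝ) :
    t * ofScalarsSum (derivCoeff (derivCoeff a)) t + (ν + 1) * ofScalarsSum (derivCoeff a) t +
      ofScalarsSum a t = 0 := by
  have ha' := radius_ofScalars_derivCoeff ha
  have hsum := ((hasSum_natCast_mul_mul_pow ha' t).add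
    ((hasSum_ofScalarsSum ha' t).mul_left (ν + 1))).add (hasSum_ofScalarsSum ha t)
  refine hsum.unique ?_
  convert hasSum_zero with n
  simp only [derivCoeff]
  linear_combination t ^ n * hrec n

end PowerSeries

section BesselCoeff

variable {ν : ℝ}

noncomputable def besselCoeff (ν : ℝ) (n : ℕ) : ℝ :=
  (-1) ^ n / (n.factorial * Real.Gamma (ν + n + 1))

lemma besselCoeff_ne_zero (hν : -1 < ν) (n : ℕ) : besselCoeff ν n ≠ 0 := by
  have : 0 < Real.Gamma (ν + n + 1) :=
    Real.Gamma_pos_of_pos (by linarith [n.cast_nonneg (α := ℝ)])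
  unfold besselCoeff
  positivity

lemma besselCoeff_succ (hν : -1 < ν) (n : ℕ) :
    (n + 1) * (ν + n + 1) * besselCoeff ν (n + 1) = -besselCoeff ν n := by
  have hpos : 0 < ν + n + 1 := by linarith [(n.cast_nonneg : (0 : ℝ) ≤ n)]
  have hΓ : Real.Gamma (ν + (n + 1 : ℕ) + 1) = (ν + n + 1) * Real.Gamma (ν + n + 1) := by
    rw [Nat.cast_succ, ← add_assoc, Real.Gamma_add_one hpos.ne']
  have := (Real.Gamma_pos_of_pos hpos).ne'
  simp only [besselCoeff, hΓ, Nat.factorial_succ, Nat.cast_mul, pow_succ]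
  field_simp
  push_cast
  ring

lemma radius_ofScalars_besselCoeff (hν : -1 < ν) :
    (ofScalars ℝ (besselCoeff ν)).radius = ⊤ := by
  refine ofScalars_radius_eq_top_of_tendsto ℝ _ (.of_forall (besselCoeff_ne_zero hν)) ?_
  have hratio (n : ℕ) :
      ‖besselCoeff ν n.succ‖ / ‖besselCoeff ν n‖ = ((n + 1) * (ν + n + 1))⁻¹ := by
    have hpos : 0 < (n + 1) * (ν + n + 1) := by
      have : (0 : ℝ) ≤ n := n.cast_nonneg
      nlinarith
    have hnorm := congrArg norm (besselCoeff_succ hν n)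
    rw [norm_neg, norm_mul, Real.norm_of_nonneg hpos.le] at hnorm
    rw [← hnorm, Nat.succ_eq_add_one]
    have := besselCoeff_ne_zero hν (n + 1)
    field_simp
  simp only [hratio]
  refine tendsto_inv_atTop_zero.comp
    (tendsto_atTop_mono (fun n => ?_) tendsto_natCast_atTop_atTop)
  have : (0 : ℝ) ≤ n := n.cast_nonneg
  nlinarith

end BesselCoeff

lemma besselJ_eq_rpow_mul_ofScalarsSum (ν : ℝ) {x : ℝ} (hx : 0 < x) :
    besselJ ν x = (x / 2) ^ ν * ofScalarsSum (besselCoeff ν) (x ^ 2 / 4) := by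
  rw [besselJ, ofScalars_sum_eq, ← tsum_mul_left]
  refine tsum_congr fun n => ?_
  have hpow : (x / 2) ^ (2 * (n : ℝ)) = (x ^ 2 / 4) ^ n := by
    rw [Real.rpow_mul (by positivity), Real.rpow_two, Real.rpow_natCast]
    ring
  rw [Real.rpow_add (by positivity), hpow, besselCoeff, smul_eq_mul]
  ring

section Lommel

variable {ν : ℝ} {g g' g'' : ℝ → ℝ}

def scaledWronskian (g g' : ℝ → ℝ) (A B t : ℝ) : ℝ :=
  B * g (A * t) * g' (B * t) - A * g' (A * t) * g (B * t)

lemma hasDerivAt_comp_const_mul (hg : ∀ t, HasDerivAt g (g' t) t) (A t : ℝ) :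
    HasDerivAt (fun t => g (A * t)) (A * g' (A * t)) t :=
  ((hg (A * t)).comp t ((hasDerivAt_id t).const_mul A)).congr_deriv (by ring)

lemma hasDerivAt_scaledWronskian (hg : ∀ t, HasDerivAt g (g' t) t)
    (hg' : ∀ t, HasDerivAt g' (g'' t) t) (A B t : ℝ) :
    HasDerivAt (scaledWronskian g g' A B)
      (B ^ 2 * g (A * t) * g'' (B * t) - A ^ 2 * g'' (A * t) * g (B * t)) t := by
  have hA := hasDerivAt_comp_const_mul hg A t
  have hB := hasDerivAt_comp_const_mul hg B t
  have hA' := hasDerivAt_comp_const_mul hg' A t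
  have hB' := hasDerivAt_comp_const_mul hg' B t
  exact (((hA.const_mul B).mul hB').sub ((hA'.const_mul A).mul hB)).congr_deriv (by ring)

lemma hasDerivAt_rpow_mul_scaledWronskian (hg : ∀ t, HasDerivAt g (g' t) t)
    (hg' : ∀ t, HasDerivAt g' (g'' t) t) (hode : ∀ t, t * g'' t + (ν + 1) * g' t + g t = 0)
    (A B : ℝ) {x : ℝ} (hx : 0 < x) :
    HasDerivAt (fun x => x ^ (2 * ν + 2) * scaledWronskian g g' A B (x ^ 2))
      (2 * (A - B) * (x ^ (2 * ν + 1) * (g (A * x ^ 2) * g (B * x ^ 2)))) x := by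
  have hrpow : HasDerivAt (fun x => x ^ (2 * ν + 2)) ((2 * ν + 2) * x ^ (2 * ν + 1)) x := by
    convert Real.hasDerivAt_rpow_const (p := 2 * ν + 2) (Or.inl hx.ne') using 3
    ring
  have hW := (hasDerivAt_scaledWronskian hg hg' A B (x ^ 2)).comp x (hasDerivAt_pow 2 x)
  have hsq : x ^ (2 * ν + 2) = x ^ (2 * ν + 1) * x := by
    rw [show 2 * ν + 2 = 2 * ν + 1 + 1 by ring, Real.rpow_add hx, Real.rpow_one]
  refine (hrpow.mul hW).congr_deriv ?_
  simp only [Function.comp, scaledWronskian, hsq]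
  push_cast
  linear_combination (-2 * x ^ (2 * ν + 1)) *
    (A * g (B * x ^ 2) * hode (A * x ^ 2) - B * g (A * x ^ 2) * hode (B * x ^ 2))

theorem integral_rpow_mul_mul_eq_scaledWronskian (hν : -1 < ν)
    (hg : ∀ t, HasDerivAt g (g' t) t) (hg' : ∀ t, HasDerivAt g' (g'' t) t)
    (hode : ∀ t, t * g'' t + (ν + 1) * g' t + g t = 0) (A B : ℝ) :
    2 * (A - B) * ∫ x in (0 : ℝ)..1, x ^ (2 * ν + 1) * (g (A * x ^ 2) * g (B * x ^ 2)) =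
      scaledWronskian g g' A B 1 := by
  have hgc : Continuous g := continuous_iff_continuousAt.2 fun t => (hg t).continuousAt
  have hWc : Continuous (scaledWronskian g g' A B) :=
    continuous_iff_continuousAt.2 fun t =>
      (hasDerivAt_scaledWronskian hg hg' A B t).continuousAt
  have hFc : Continuous fun x : ℝ => x ^ (2 * ν + 2) * scaledWronskian g g' A B (x ^ 2) :=
    ((Real.continuous_rpow_const (by linarith)).mul (hWc.comp (continuous_pow 2)))
  have hint : IntervalIntegrable (fun x : ℝ => x ^ (2 * ν + 1) * (g (A * x ^ 2) * g (B * x ^ 2)))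
      MeasureTheory.volume 0 1 :=
    (intervalIntegral.intervalIntegrable_rpow' (by linarith)).mul_continuousOn (by fun_prop)
  rw [← intervalIntegral.integral_const_mul,
    intervalIntegral.integral_eq_sub_of_hasDeriv_right_of_le zero_le_one hFc.continuousOn
      (fun x hx => (hasDerivAt_rpow_mul_scaledWronskian hg hg' hode A B hx.1).hasDerivWithinAt)
      (hint.const_mul _)]
  simp [Real.zero_rpow (by linarith : 2 * ν + 2 ≠ 0)]

end Lommel

lemma besselJ_mul_eq_rpow_mul {ν μ x : ℝ} (hμ : 0 < μ) (hx : 0 < x) :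
    besselJ ν (μ * x) =
      (μ / 2) ^ ν * x ^ ν * ofScalarsSum (besselCoeff ν) (μ ^ 2 / 4 * x ^ 2) := by
  rw [besselJ_eq_rpow_mul_ofScalarsSum ν (by positivity), mul_div_right_comm,
    Real.mul_rpow (by positivity) hx.le]
  ring_nf

lemma besselJ_mul_besselJ_mul_self {ν μ μ' x : ℝ} (hμ : 0 < μ) (hμ' : 0 < μ') (hx : 0 < x) :
    besselJ ν (μ * x) * besselJ ν (μ' * x) * x = (μ / 2) ^ ν * (μ' / 2) ^ ν *
      (x ^ (2 * ν + 1) * (ofScalarsSum (besselCoeff ν) (μ ^ 2 / 4 * x ^ 2) *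
        ofScalarsSum (besselCoeff ν) (μ' ^ 2 / 4 * x ^ 2))) := by
  rw [besselJ_mul_eq_rpow_mul hμ hx, besselJ_mul_eq_rpow_mul hμ' hx,
    show 2 * ν + 1 = ν + ν + 1 by ring, Real.rpow_add hx, Real.rpow_add hx, Real.rpow_one]
  ring

theorem bessel_orthogonality (ν : ℝ) (hν : -1 < ν) (μ μ' : ℝ)
    (hμ : 0 < μ) (hμ' : 0 < μ') (hne : μ ≠ μ')
    (hzero : besselJ ν μ = 0) (hzero' : besselJ ν μ' = 0) :
    ∫ x in (0:ℝ)..1, besselJ ν (μ * x) * besselJ ν (μ' * x) * x = 0 := by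
  have hrad := radius_ofScalars_besselCoeff hν
  have hroot {μ : ℝ} (hμ : 0 < μ) (h : besselJ ν μ = 0) :
      ofScalarsSum (besselCoeff ν) (μ ^ 2 / 4) = 0 := by
    rw [besselJ_eq_rpow_mul_ofScalarsSum ν hμ] at h
    exact (mul_eq_zero.1 h).resolve_left (Real.rpow_pos_of_pos (by positivity) ν).ne'
  have hlommel := integral_rpow_mul_mul_eq_scaledWronskian hν (hasDerivAt_ofScalarsSum hrad)
    (hasDerivAt_ofScalarsSum (radius_ofScalars_derivCoeff hrad))
    (ofScalarsSum_besselODE hrad (besselCoeff_succ hν)) (μ ^ 2 / 4) (μ' ^ 2 / 4)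
  rw [scaledWronskian, mul_one, mul_one, hroot hμ hzero, hroot hμ' hzero', mul_zero, zero_mul,
    mul_zero, sub_zero, mul_eq_zero] at hlommel
  have hAB : 2 * (μ ^ 2 / 4 - μ' ^ 2 / 4) ≠ 0 := by
    have := (pow_left_inj₀ hμ.le hμ'.le two_ne_zero).not.2 hne
    contrapose! this
    linarith
  rw [intervalIntegral.integral_congr_ae (.of_forall fun x hx =>
      besselJ_mul_besselJ_mul_self hμ hμ' (by simpa using hx.1)),
    intervalIntegral.integral_const_mul, hlommel.resolve_left hAB, mul_zero]
end

section
/- Let ν > -1 and let μ be a positive zero of the Bessel function J_ν (i.e. μ > 0 and J_ν(μ) = 0). Then ∫₀¹ (J_ν(μx))² · x dx = (1/2) · (J_{ν+1}(μ))². -/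
open scoped Real

/-!
Write `J_ν(x) = (x/2)^ν g_ν((x/2)²)` with `g_ν` the entire power series `besselSeries ν`.
Its coefficients satisfy `g_ν' = -g_{ν+1}` and `g_ν = (ν+1) g_{ν+1} + t g_{ν+1}'`, and from
these two relations alone a formal computation shows that `P = g_ν² - ν g_ν g_{ν+1} + t g_{ν+1}²`
solves `(ν+1) P + t P' = g_ν²`: the `n`-th coefficient of `g_ν²` is `ν+1+n` times that of `P`.
Integrating `x^(2ν+1) g_ν(c x²)²` term by term over `[0,1]` divides the `n`-th coefficient by
`2(ν+1+n)`, so the integral is `P(c)/2`. This is Lommel's formula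
`∫₀¹ J_ν(μx)² x dx = (J_ν(μ)² - (2ν/μ) J_ν(μ) J_{ν+1}(μ) + J_{ν+1}(μ)²) / 2`,
and at a zero of `J_ν` only the last term survives.
-/

open PowerSeries Finset MeasureTheory

namespace PowerSeries

theorem coeff_X_mul_derivative {R : Type*} [CommSemiring R] (f : R⟦X⟧) (n : ℕ) :
    coeff n (X * d⁄dX R f) = n * coeff n f := by
  cases n with
  | zero => simp
  | succ n => rw [coeff_succ_X_mul, coeff_derivative, mul_comm]; push_cast; rfl

theorem sum_antidiagonal_coeff_mul_pow {R : Type*} [CommSemiring R] (f g : R⟦X⟧) (t : R)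
    (n : ℕ) :
    ∑ kl ∈ antidiagonal n, coeff kl.1 f * t ^ kl.1 * (coeff kl.2 g * t ^ kl.2) =
      coeff n (f * g) * t ^ n := by
  rw [coeff_mul, sum_mul]
  refine sum_congr rfl fun kl hkl => ?_
  rw [← mem_antidiagonal.mp hkl, pow_add]
  ring

theorem hasSum_coeff_X_mul_mul_pow {R : Type*} [CommRing R] [TopologicalSpace R]
    [IsTopologicalRing R] {f : R⟦X⟧} {t s : R} (hf : HasSum (fun n => coeff n f * t ^ n) s) :
    HasSum (fun n => coeff n (X * f) * t ^ n) (t * s) := by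
  rw [← hasSum_nat_add_iff' 1]
  simpa [coeff_succ_X_mul, pow_succ, mul_left_comm _ t, mul_comm _ t] using hf.mul_left t

section NormedCommRing

variable {R : Type*} [NormedCommRing R] {f g : R⟦X⟧} {t : R}

theorem summable_norm_coeff_mul_mul_pow (hf : Summable fun n => ‖coeff n f * t ^ n‖)
    (hg : Summable fun n => ‖coeff n g * t ^ n‖) :
    Summable fun n => ‖coeff n (f * g) * t ^ n‖ := by
  simpa only [sum_antidiagonal_coeff_mul_pow] using
    summable_norm_sum_mul_antidiagonal_of_summable_norm hf hg

theorem hasSum_coeff_mul_mul_pow [CompleteSpace R] (hf : Summable fun n => ‖coeff n f * t ^ n‖)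
    (hg : Summable fun n => ‖coeff n g * t ^ n‖) :
    HasSum (fun n => coeff n (f * g) * t ^ n)
      ((∑' n, coeff n f * t ^ n) * ∑' n, coeff n g * t ^ n) := by
  rw [tsum_mul_tsum_eq_tsum_sum_antidiagonal_of_summable_norm hf hg]
  simpa only [sum_antidiagonal_coeff_mul_pow] using
    (summable_norm_coeff_mul_mul_pow hf hg).of_norm.hasSum

end NormedCommRing

end PowerSeries

noncomputable def besselSeries (ν : ℝ) : ℝ⟦X⟧ :=
  mk fun r => (-1) ^ r / (r.factorial * Real.Gamma (ν + r + 1))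

theorem derivative_besselSeries (ν : ℝ) : d⁄dX ℝ (besselSeries ν) = -besselSeries (ν + 1) := by
  ext r
  simp only [besselSeries, coeff_derivative, coeff_mk, map_neg, Nat.factorial_succ]
  push_cast
  rw [show ν + (r + 1) + 1 = ν + 1 + r + 1 by ring]
  field_simp
  ring

theorem besselSeries_eq_C_mul_add_X_mul_derivative (ν : ℝ) :
    besselSeries ν = C (ν + 1) * besselSeries (ν + 1) + X * d⁄dX ℝ (besselSeries (ν + 1)) := by
  ext r
  rw [map_add, coeff_C_mul, coeff_X_mul_derivative]
  simp only [besselSeries, coeff_mk, show ν + 1 + r + 1 = ν + r + 1 + 1 by ring]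
  rcases eq_or_ne (ν + r + 1) 0 with h | h
  -- at a pole, Mathlib's `Γ` is `0` and both sides vanish
  · simp only [h, zero_add, Real.Gamma_zero, Real.Gamma_one, mul_zero, mul_one, div_zero]
    linear_combination (-((-1) ^ r / r.factorial : ℝ)) * h
  · rw [Real.Gamma_add_one h]
    field_simp
    ring

noncomputable def lommelSeries (ν : ℝ) : ℝ⟦X⟧ :=
  besselSeries ν * besselSeries ν - C ν * (besselSeries ν * besselSeries (ν + 1)) +
    X * (besselSeries (ν + 1) * besselSeries (ν + 1))

theorem C_mul_lommelSeries_add_X_mul_derivative (ν : ℝ) :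
    C (ν + 1) * lommelSeries ν + X * d⁄dX ℝ (lommelSeries ν) = besselSeries ν * besselSeries ν := by
  set G := besselSeries ν
  set H := besselSeries (ν + 1)
  have hG : d⁄dX ℝ G = -H := derivative_besselSeries ν
  have hH : G = (C ν + 1) * H + X * d⁄dX ℝ H := by
    rw [← map_one C, ← map_add]
    exact besselSeries_eq_C_mul_add_X_mul_derivative ν
  have hdP : d⁄dX ℝ (lommelSeries ν) =
      2 * G * d⁄dX ℝ G - C ν * (G * d⁄dX ℝ H + H * d⁄dX ℝ G) + H * H + 2 * X * H * d⁄dX ℝ H := by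
    simp only [lommelSeries, map_add, map_sub, Derivation.leibniz, smul_eq_mul, derivative_C,
      derivative_X]
    ring
  rw [hdP, hG, lommelSeries, map_add, map_one]
  linear_combination (C ν * G - 2 * X * H) * hH

theorem coeff_lommelSeries (ν : ℝ) (n : ℕ) :
    (ν + 1 + n) * coeff n (lommelSeries ν) = coeff n (besselSeries ν * besselSeries ν) := by
  rw [← C_mul_lommelSeries_add_X_mul_derivative, map_add, coeff_C_mul, coeff_X_mul_derivative]
  ring

theorem coeff_besselSeries_succ (ν : ℝ) (r : ℕ) :
    (r + 1) * (ν + r + 1) * coeff (r + 1) (besselSeries ν) = -coeff r (besselSeries ν) := by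
  have hd := congr_arg (coeff r) (derivative_besselSeries ν)
  have hs := congr_arg (coeff r) (besselSeries_eq_C_mul_add_X_mul_derivative ν)
  rw [coeff_derivative, map_neg] at hd
  rw [map_add, coeff_C_mul, coeff_X_mul_derivative] at hs
  linear_combination (ν + r + 1) * hd + hs

theorem summable_norm_coeff_besselSeries_mul_pow (ν t : ℝ) :
    Summable fun r => ‖coeff r (besselSeries ν) * t ^ r‖ := by
  refine (summable_of_ratio_norm_eventually_le (f := fun r => coeff r (besselSeries ν) * t ^ r)
    (r := 1 / 2) (by norm_num) ?_).norm
  obtain ⟨N, hN⟩ := exists_nat_ge (2 * |t| + |ν|)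
  filter_upwards [Filter.eventually_ge_atTop N] with r hr
  have hr' : (N : ℝ) ≤ r := by exact_mod_cast hr
  have hD : 2 * |t| + 1 ≤ (r + 1) * (ν + r + 1) := by
    nlinarith [neg_abs_le ν, abs_nonneg t, (Nat.cast_nonneg r : (0 : ℝ) ≤ r)]
  have hDpos : (0 : ℝ) < (r + 1) * (ν + r + 1) := by linarith [abs_nonneg t]
  have hrec : ‖coeff (r + 1) (besselSeries ν) * t ^ (r + 1)‖ * ((r + 1) * (ν + r + 1)) =
      |t| * ‖coeff r (besselSeries ν) * t ^ r‖ := by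
    rw [Real.norm_eq_abs, Real.norm_eq_abs, ← abs_of_pos hDpos, ← abs_mul, ← abs_mul,
      ← abs_neg (t * _)]
    congr 1
    linear_combination (t ^ r * t) * coeff_besselSeries_succ ν r
  nlinarith [norm_nonneg (coeff (r + 1) (besselSeries ν) * t ^ (r + 1)),
    norm_nonneg (coeff r (besselSeries ν) * t ^ r), abs_nonneg t]

theorem besselJ_eq_rpow_mul_tsum (ν : ℝ) {x : ℝ} (hx : 0 < x) :
    besselJ ν x = (x / 2) ^ ν * ∑' r, coeff r (besselSeries ν) * ((x / 2) ^ 2) ^ r := by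
  rw [besselJ, ← tsum_mul_left]
  refine tsum_congr fun r => ?_
  have hpow : (x / 2) ^ (2 * (r : ℝ)) = ((x / 2) ^ 2) ^ r := by
    rw [← pow_mul, ← Real.rpow_natCast]
    push_cast
    ring_nf
  rw [Real.rpow_add (by positivity), hpow, besselSeries, coeff_mk]
  ring

theorem setIntegral_Ioc_zero_one_mul_rpow (k : ℝ) {e : ℝ} (he : -1 < e) :
    ∫ x in Set.Ioc (0 : ℝ) 1, k * x ^ e = k / (e + 1) := by
  rw [← intervalIntegral.integral_of_le zero_le_one, intervalIntegral.integral_const_mul,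
    integral_rpow (Or.inl he), Real.one_rpow, Real.zero_rpow (by linarith)]
  ring

theorem integral_tsum_mul_rpow {b e : ℕ → ℝ} (he : ∀ n, -1 < e n)
    (hb : Summable fun n => ‖b n‖ / (e n + 1)) :
    ∫ x in (0 : ℝ)..1, ∑' n, b n * x ^ e n = ∑' n, b n / (e n + 1) := by
  have hint (n : ℕ) : IntegrableOn (fun x => b n * x ^ e n) (Set.Ioc 0 1) := by
    have := (intervalIntegral.intervalIntegrable_rpow' (a := 0) (b := 1) (he n)).const_mul (b n)
    rwa [intervalIntegrable_iff_integrableOn_Ioc_of_le zero_le_one] at this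
  have hnorm (n : ℕ) : ∫ x in Set.Ioc (0 : ℝ) 1, ‖b n * x ^ e n‖ = ‖b n‖ / (e n + 1) := by
    rw [← setIntegral_Ioc_zero_one_mul_rpow _ (he n)]
    refine setIntegral_congr_fun measurableSet_Ioc fun x hx => ?_
    rw [norm_mul, Real.norm_of_nonneg (Real.rpow_nonneg hx.1.le _)]
  rw [intervalIntegral.integral_of_le zero_le_one,
    ← integral_tsum_of_summable_integral_norm hint (by simpa only [hnorm] using hb)]
  exact tsum_congr fun n => setIntegral_Ioc_zero_one_mul_rpow _ (he n)

theorem hasSum_coeff_lommelSeries_mul_pow (ν t : ℝ) :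
    HasSum (fun n => coeff n (lommelSeries ν) * t ^ n)
      ((∑' r, coeff r (besselSeries ν) * t ^ r) ^ 2 -
        ν * (∑' r, coeff r (besselSeries ν) * t ^ r) *
          (∑' r, coeff r (besselSeries (ν + 1)) * t ^ r) +
        t * (∑' r, coeff r (besselSeries (ν + 1)) * t ^ r) ^ 2) := by
  have hG := summable_norm_coeff_besselSeries_mul_pow ν t
  have hH := summable_norm_coeff_besselSeries_mul_pow (ν + 1) t
  have hsum := ((hasSum_coeff_mul_mul_pow hG hG).sub
    ((hasSum_coeff_mul_mul_pow hG hH).mul_left ν)).add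
    (hasSum_coeff_X_mul_mul_pow (hasSum_coeff_mul_mul_pow hH hH))
  have hcoeff (n : ℕ) : coeff n (lommelSeries ν) * t ^ n =
      coeff n (besselSeries ν * besselSeries ν) * t ^ n -
        ν * (coeff n (besselSeries ν * besselSeries (ν + 1)) * t ^ n) +
        coeff n (X * (besselSeries (ν + 1) * besselSeries (ν + 1))) * t ^ n := by
    simp only [lommelSeries, map_add, map_sub, coeff_C_mul]
    ring
  set g := ∑' r, coeff r (besselSeries ν) * t ^ r
  set h := ∑' r, coeff r (besselSeries (ν + 1)) * t ^ r
  rw [show g ^ 2 - ν * g * h + t * h ^ 2 = g * g - ν * (g * h) + t * (h * h) by ring]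
  simpa only [hcoeff] using hsum

theorem besselJ_sq_mul_self_eq_tsum (ν : ℝ) {μ x : ℝ} (hμ : 0 < μ) (hx : 0 < x) :
    besselJ ν (μ * x) ^ 2 * x = ∑' n, ((μ / 2) ^ ν) ^ 2 *
      (coeff n (besselSeries ν * besselSeries ν) * ((μ / 2) ^ 2) ^ n) *
        x ^ (2 * ν + 1 + 2 * (n : ℝ)) := by
  have hG := summable_norm_coeff_besselSeries_mul_pow ν ((μ / 2) ^ 2 * x ^ 2)
  rw [besselJ_eq_rpow_mul_tsum ν (by positivity), show μ * x / 2 = μ / 2 * x by ring, mul_pow,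
    mul_pow, sq (tsum _), ← (hasSum_coeff_mul_mul_pow hG hG).tsum_eq,
    Real.mul_rpow (by positivity) hx.le, ← tsum_mul_left, ← tsum_mul_right]
  refine tsum_congr fun n => ?_
  have hxpow : (x ^ ν) ^ 2 * x * (x ^ 2) ^ n = x ^ (2 * ν + 1 + 2 * (n : ℝ)) := by
    rw [Real.rpow_add hx, Real.rpow_add hx, Real.rpow_one,
      show 2 * ν = ν * (2 : ℕ) by push_cast; ring, Real.rpow_mul_natCast hx.le,
      show 2 * (n : ℝ) = (2 * n : ℕ) by push_cast; ring, Real.rpow_natCast, pow_mul]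
  rw [← hxpow]
  ring

theorem integral_besselJ_sq_mul_self {ν μ : ℝ} (hν : -1 < ν) (hμ : 0 < μ) :
    ∫ x in (0 : ℝ)..1, besselJ ν (μ * x) ^ 2 * x =
      (besselJ ν μ ^ 2 - 2 * ν / μ * besselJ ν μ * besselJ (ν + 1) μ +
        besselJ (ν + 1) μ ^ 2) / 2 := by
  set b : ℕ → ℝ := fun n =>
    ((μ / 2) ^ ν) ^ 2 * (coeff n (besselSeries ν * besselSeries ν) * ((μ / 2) ^ 2) ^ n)
  have hG := summable_norm_coeff_besselSeries_mul_pow ν ((μ / 2) ^ 2)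
  have hb : Summable fun n => ‖b n‖ := by
    simpa only [b, norm_mul] using
      (summable_norm_coeff_mul_mul_pow hG hG).mul_left ‖((μ / 2) ^ ν) ^ 2‖
  have hpos (n : ℕ) : 0 < ν + 1 + n := by linarith [n.cast_nonneg (α := ℝ)]
  have hb' : Summable fun n => ‖b n‖ / (2 * ν + 1 + 2 * n + 1) := by
    refine (hb.div_const (2 * (ν + 1))).of_nonneg_of_le
      (fun n => div_nonneg (norm_nonneg _) (by linarith [hpos n])) fun n => ?_
    exact div_le_div_of_nonneg_left (norm_nonneg _) (by linarith) (by linarith [hpos n])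
  calc ∫ x in (0 : ℝ)..1, besselJ ν (μ * x) ^ 2 * x
      = ∫ x in (0 : ℝ)..1, ∑' n, b n * x ^ (2 * ν + 1 + 2 * (n : ℝ)) := by
        refine intervalIntegral.integral_congr_ae (.of_forall fun x hx => ?_)
        rw [Set.uIoc_of_le zero_le_one] at hx
        exact besselJ_sq_mul_self_eq_tsum ν hμ hx.1
    _ = ∑' n, b n / (2 * ν + 1 + 2 * n + 1) :=
        integral_tsum_mul_rpow (fun n => by linarith [hpos n]) hb'
    _ = ((μ / 2) ^ ν) ^ 2 / 2 * ∑' n, coeff n (lommelSeries ν) * ((μ / 2) ^ 2) ^ n := by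
        rw [← tsum_mul_left]
        refine tsum_congr fun n => ?_
        simp only [b]
        rw [show 2 * ν + 1 + 2 * n + 1 = 2 * (ν + 1 + n) by ring, ← coeff_lommelSeries]
        field_simp [(hpos n).ne']
    _ = _ := by
        rw [(hasSum_coeff_lommelSeries_mul_pow ν _).tsum_eq, besselJ_eq_rpow_mul_tsum ν hμ,
          besselJ_eq_rpow_mul_tsum (ν + 1) hμ, Real.rpow_add_one (by positivity)]
        generalize ∑' r, coeff r (besselSeries ν) * ((μ / 2) ^ 2) ^ r = g
        generalize ∑' r, coeff r (besselSeries (ν + 1)) * ((μ / 2) ^ 2) ^ r = h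
        field_simp

theorem bessel_normalization (ν : ℝ) (hν : -1 < ν) (μ : ℝ)
    (hμ : 0 < μ) (hzero : besselJ ν μ = 0) :
    ∫ x in (0:ℝ)..1, (besselJ ν (μ * x)) ^ 2 * x
      = (1 / 2) * (besselJ (ν + 1) μ) ^ 2 := by
  rw [integral_besselJ_sq_mul_self hν hμ, hzero]
  ring
end
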